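/- arXiv:quant-ph/0102017 — 4 statements merged into one kernel-verified Lean document; each statement's English description precedes it below -/
import Mathlib

section
/- If a real Lie subalgebra L of u(N) contains x_{n,n+1} and y_{n,n+1} for all 1 ≤ n ≤ N-1, then L contains su(N). -/
open Matrix Complex

attribute [local instance] LieRing.ofAssociativeRing

noncomputable def e (N m n : ℕ) : Matrix (Fin N) (Fin N) ℂ :=
  Matrix.of fun k l => if (k : ℕ) + 1 = m ∧ (l : ℕ) + 1 = n then 1 else 0

noncomputable def xm (N m n : ℕ) : Matrix (Fin N) (Fin N) ℂ := e N m n - e N n m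
noncomputable def ym (N m n : ℕ) : Matrix (Fin N) (Fin N) ℂ := Complex.I • (e N m n + e N n m)

namespace SuNAux

variable {N : ℕ}

noncomputable def X (i j : Fin N) : Matrix (Fin N) (Fin N) ℂ :=
  Matrix.single i j 1 - Matrix.single j i 1

noncomputable def Y (i j : Fin N) : Matrix (Fin N) (Fin N) ℂ :=
  Complex.I • (Matrix.single i j 1 + Matrix.single j i 1)

noncomputable def D (i j : Fin N) : Matrix (Fin N) (Fin N) ℂ :=
  Complex.I • (Matrix.single i i (1 : ℂ) - Matrix.single j j 1)

lemma e_eq (i j : Fin N) : e N ((i : ℕ) + 1) ((j : ℕ) + 1) = Matrix.single i j 1 := by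
  ext k l
  simp only [e, Matrix.single, Matrix.of_apply]
  by_cases h : i = k ∧ j = l
  · obtain ⟨rfl, rfl⟩ := h
    simp
  · rw [if_neg h, if_neg]
    rintro ⟨h1, h2⟩
    exact h ⟨Fin.ext (by omega), Fin.ext (by omega)⟩

lemma xm_eq (i j : Fin N) : xm N ((i : ℕ) + 1) ((j : ℕ) + 1) = X i j := by
  simp [xm, X, e_eq]

lemma ym_eq (i j : Fin N) : ym N ((i : ℕ) + 1) ((j : ℕ) + 1) = Y i j := by
  simp [ym, Y, e_eq]

lemma lie_XX {i j k : Fin N} (h1 : i ≠ j) (h2 : j ≠ k) (h3 : i ≠ k) :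
    ⁅X i j, X j k⁆ = X i k := by
  have z1 : Matrix.single i j (1:ℂ) * Matrix.single k j 1 = 0 :=
    Matrix.single_mul_single_of_ne (c := 1) i j _ h2 1
  have z2 : Matrix.single j i (1:ℂ) * Matrix.single j k 1 = 0 :=
    Matrix.single_mul_single_of_ne (c := 1) j i _ h1 1
  have z3 : Matrix.single j i (1:ℂ) * Matrix.single k j 1 = 0 :=
    Matrix.single_mul_single_of_ne (c := 1) j i _ h3 1
  have z4 : Matrix.single j k (1:ℂ) * Matrix.single i j 1 = 0 :=
    Matrix.single_mul_single_of_ne (c := 1) j k _ h3.symm 1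
  have z5 : Matrix.single j k (1:ℂ) * Matrix.single j i 1 = 0 :=
    Matrix.single_mul_single_of_ne (c := 1) j k _ h2.symm 1
  have z6 : Matrix.single k j (1:ℂ) * Matrix.single i j 1 = 0 :=
    Matrix.single_mul_single_of_ne (c := 1) k j _ h1.symm 1
  simp only [X, Ring.lie_def, sub_mul, mul_sub, z1, z2, z3, z4, z5, z6,
    Matrix.single_mul_single_same, one_mul]
  abel

lemma lie_XY {i j k : Fin N} (h1 : i ≠ j) (h2 : j ≠ k) (h3 : i ≠ k) :
    ⁅X i j, Y j k⁆ = Y i k := by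
  have z1 : Matrix.single i j (1:ℂ) * Matrix.single k j 1 = 0 :=
    Matrix.single_mul_single_of_ne (c := 1) i j _ h2 1
  have z2 : Matrix.single j i (1:ℂ) * Matrix.single j k 1 = 0 :=
    Matrix.single_mul_single_of_ne (c := 1) j i _ h1 1
  have z3 : Matrix.single j i (1:ℂ) * Matrix.single k j 1 = 0 :=
    Matrix.single_mul_single_of_ne (c := 1) j i _ h3 1
  have z4 : Matrix.single j k (1:ℂ) * Matrix.single i j 1 = 0 :=
    Matrix.single_mul_single_of_ne (c := 1) j k _ h3.symm 1
  have z5 : Matrix.single j k (1:ℂ) * Matrix.single j i 1 = 0 :=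
    Matrix.single_mul_single_of_ne (c := 1) j k _ h2.symm 1
  have z6 : Matrix.single k j (1:ℂ) * Matrix.single i j 1 = 0 :=
    Matrix.single_mul_single_of_ne (c := 1) k j _ h1.symm 1
  simp only [X, Y, Ring.lie_def, Matrix.mul_smul, Matrix.smul_mul, sub_mul, mul_sub,
    add_mul, mul_add, smul_sub, smul_add, z1, z2, z3, z4, z5, z6,
    Matrix.single_mul_single_same, one_mul, smul_zero]
  abel

lemma lie_XY_same {i j : Fin N} (h : i ≠ j) :
    ⁅X i j, Y i j⁆ = (2 : ℝ) • D i j := by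
  have w1 : Matrix.single i j (1:ℂ) * Matrix.single i j 1 = 0 :=
    Matrix.single_mul_single_of_ne (c := 1) i j _ h.symm 1
  have w2 : Matrix.single j i (1:ℂ) * Matrix.single j i 1 = 0 :=
    Matrix.single_mul_single_of_ne (c := 1) j i _ h 1
  simp only [X, Y, D, Ring.lie_def, Matrix.mul_smul, Matrix.smul_mul, sub_mul, mul_sub,
    add_mul, mul_add, smul_sub, smul_add, w1, w2,
    Matrix.single_mul_single_same, one_mul, smul_zero]
  ext k l
  simp only [Matrix.sub_apply, Matrix.add_apply, Matrix.smul_apply, Matrix.zero_apply,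
    smul_eq_mul, Complex.real_smul]
  push_cast
  ring

end SuNAux

open SuNAux in
theorem subalgebra_contains_suN (N : ℕ)
    (L : LieSubalgebra ℝ (Matrix (Fin N) (Fin N) ℂ))
    (hL : ∀ A ∈ L, Aᴴ = -A)
    (hxy : ∀ n, 1 ≤ n → n ≤ N - 1 → xm N n (n+1) ∈ L ∧ ym N n (n+1) ∈ L) :
    ∀ A : Matrix (Fin N) (Fin N) ℂ, Aᴴ = -A → A.trace = 0 → A ∈ L := by
  intro A hA htr
  rcases Nat.eq_zero_or_pos N with hN | hN
  · have hA0 : A = 0 := by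
      subst hN; ext i; exact i.elim0
    rw [hA0]; exact L.zero_mem'
  -- base generators
  have hbase : ∀ i j : Fin N, (j : ℕ) = (i : ℕ) + 1 → X i j ∈ L ∧ Y i j ∈ L := by
    intro i j hij
    obtain ⟨hx, hy⟩ := hxy ((i : ℕ) + 1) (by omega) (by have := j.isLt; omega)
    have hxi : xm N ((i : ℕ) + 1) ((j : ℕ) + 1) ∈ L := by
      rwa [show (j : ℕ) + 1 = (i : ℕ) + 1 + 1 by omega]
    have hyi : ym N ((i : ℕ) + 1) ((j : ℕ) + 1) ∈ L := by
      rwa [show (j : ℕ) + 1 = (i : ℕ) + 1 + 1 by omega]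
    rw [xm_eq] at hxi
    rw [ym_eq] at hyi
    exact ⟨hxi, hyi⟩
  have hXY : ∀ d : ℕ, ∀ i j : Fin N, (j : ℕ) = (i : ℕ) + d + 1 → X i j ∈ L ∧ Y i j ∈ L := by
    intro d
    induction d with
    | zero => intro i j h; exact hbase i j (by omega)
    | succ d ih =>
      intro i j h
      have hjlt := j.isLt
      set j' : Fin N := ⟨(i : ℕ) + d + 1, by omega⟩ with hj'
      have h1 := ih i j' rfl
      have h2 := hbase j' j (by simp [hj']; omega)
      have e1 : i ≠ j' := by
        intro hc; have := congrArg Fin.val hc; simp [hj'] at this; omega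
      have e2 : j' ≠ j := by
        intro hc; have := congrArg Fin.val hc; simp [hj'] at this; omega
      have e3 : i ≠ j := by
        intro hc; have := congrArg Fin.val hc; omega
      constructor
      · rw [← lie_XX e1 e2 e3]; exact L.lie_mem h1.1 h2.1
      · rw [← lie_XY e1 e2 e3]; exact L.lie_mem h1.1 h2.2
  have hXmem : ∀ i j : Fin N, i < j → X i j ∈ L ∧ Y i j ∈ L := by
    intro i j h
    exact hXY ((j : ℕ) - (i : ℕ) - 1) i j (by have := Fin.lt_def.mp h; omega)
  have hD : ∀ i j : Fin N, i < j → D i j ∈ L := by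
    intro i j h
    have hne : i ≠ j := Fin.ne_of_lt h
    have hb := L.lie_mem (hXmem i j h).1 (hXmem i j h).2
    rw [lie_XY_same hne] at hb
    have := L.smul_mem ((2 : ℝ)⁻¹) hb
    rwa [smul_smul, inv_mul_cancel₀ (by norm_num), one_smul] at this
  -- setup
  set last : Fin N := ⟨N - 1, by omega⟩ with hlast
  set f : Fin N → Fin N → Matrix (Fin N) (Fin N) ℂ :=
    fun i j => Matrix.single i j (A i j) with hf
  set g : Fin N → Matrix (Fin N) (Fin N) ℂ :=
    fun i => (A i i).im • (Complex.I • Matrix.single last last (1 : ℂ)) with hg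
  set B : Fin N → Fin N → Matrix (Fin N) (Fin N) ℂ := fun i j =>
    if i < j then (A i j).re • X i j + (A i j).im • Y i j
    else if j < i then 0 else (A i i).im • D i last with hBdef
  have hBmem : ∀ i j, B i j ∈ L := by
    intro i j
    rw [hBdef]
    dsimp only
    split_ifs with h1 h2
    · exact L.add_mem' (L.smul_mem _ (hXmem i j h1).1) (L.smul_mem _ (hXmem i j h1).2)
    · exact L.zero_mem'
    · have hDm : D i last ∈ L := by
        rcases lt_or_eq_of_le (show (i : ℕ) ≤ N - 1 by have := i.isLt; omega) with h | h
        · exact hD i last (by rw [Fin.lt_def]; simpa [hlast] using h)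
        · have : i = last := Fin.ext (by simpa [hlast] using h)
          rw [this, D, sub_self, smul_zero]
          exact L.zero_mem'
      exact L.smul_mem _ hDm
  -- entrywise facts from skew-Hermitian
  have hconj : ∀ i j : Fin N, (starRingEnd ℂ) (A i j) = -A j i := by
    intro i j
    have := congrFun (congrFun hA j) i
    simpa [Matrix.conjTranspose_apply, Matrix.neg_apply] using this
  have hre0 : ∀ i : Fin N, (A i i).re = 0 := by
    intro i
    have h := hconj i i
    have := congrArg Complex.re h
    simp at this
    linarith
  have him : ∀ i : Fin N, A i i = ((A i i).im : ℂ) * Complex.I := by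
    intro i
    apply Complex.ext <;> simp [hre0 i]
  -- rewrite B
  have pair_eq : ∀ i j : Fin N, i ≠ j →
      (A i j).re • X i j + (A i j).im • Y i j = f i j + f j i := by
    intro i j hij
    have hji : A j i = -(starRingEnd ℂ) (A i j) := by
      rw [hconj i j]; ring
    ext k l
    simp only [hf, X, Y, Matrix.add_apply, Matrix.sub_apply, Matrix.smul_apply,
      Matrix.single, Matrix.of_apply, smul_eq_mul, Complex.real_smul]
    by_cases h1 : i = k ∧ j = l <;> by_cases h2 : j = k ∧ i = l
    · exfalso; exact hij (h1.1.trans h2.1.symm)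
    · simp only [if_pos h1, if_neg h2]
      simp [Complex.re_add_im]
    · simp only [if_neg h1, if_pos h2]
      rw [hji]
      apply Complex.ext <;> simp
    · simp [if_neg h1, if_neg h2]
  have diag_eq : ∀ i : Fin N, (A i i).im • D i last = f i i - g i := by
    intro i
    simp only [hf, hg, D]
    rw [smul_sub, smul_sub, smul_single, smul_eq_mul, mul_one,
      smul_single, Complex.real_smul, ← him i]
  have hB : ∀ i j : Fin N, B i j =
      ((if i < j then f i j else 0) + (if i < j then f j i else 0)
        + (if i = j then f i j else 0)) - (if i = j then g i else 0) := by
    intro i j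
    rw [hBdef]
    dsimp only
    rcases lt_trichotomy i j with h | h | h
    · simp only [if_pos h, if_neg (asymm h), if_neg (ne_of_lt h),
        pair_eq i j (ne_of_lt h)]
      abel
    · subst h
      simp [diag_eq i]
    · simp [h, asymm h, ne_of_gt h]
  have htr' : ∑ i : Fin N, (A i i).im = 0 := by
    have h0 : (∑ i : Fin N, A i i) = 0 := by
      simpa [Matrix.trace, Matrix.diag] using htr
    have := congrArg Complex.im h0
    simpa [Complex.im_sum] using this
  have hsum : ∑ i : Fin N, ∑ j : Fin N, B i j = A := by
    calc ∑ i : Fin N, ∑ j : Fin N, B i j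
        = ∑ i : Fin N, ∑ j : Fin N,
            (((if i < j then f i j else 0) + (if i < j then f j i else 0)
              + (if i = j then f i j else 0)) - (if i = j then g i else 0)) := by
          exact Finset.sum_congr rfl fun i _ => Finset.sum_congr rfl fun j _ => hB i j
      _ = ((∑ i : Fin N, ∑ j : Fin N, (if i < j then f i j else 0))
            + (∑ i : Fin N, ∑ j : Fin N, (if i < j then f j i else 0))
            + (∑ i : Fin N, ∑ j : Fin N, (if i = j then f i j else 0)))
            - (∑ i : Fin N, ∑ j : Fin N, (if i = j then g i else 0)) := by
          simp [Finset.sum_add_distrib, Finset.sum_sub_distrib]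
      _ = ((∑ i : Fin N, ∑ j : Fin N, (if i < j then f i j else 0))
            + (∑ i : Fin N, ∑ j : Fin N, (if j < i then f i j else 0))
            + (∑ i : Fin N, ∑ j : Fin N, (if i = j then f i j else 0)))
            - (∑ i : Fin N, ∑ j : Fin N, (if i = j then g i else 0)) := by
          rw [Finset.sum_comm (f := fun i j => if i < j then f j i else 0)]
      _ = (∑ i : Fin N, ∑ j : Fin N, f i j)
            - (∑ i : Fin N, ∑ j : Fin N, (if i = j then g i else 0)) := by
          congr 1
          rw [← Finset.sum_add_distrib, ← Finset.sum_add_distrib]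
          apply Finset.sum_congr rfl
          intro i _
          rw [← Finset.sum_add_distrib, ← Finset.sum_add_distrib]
          apply Finset.sum_congr rfl
          intro j _
          rcases lt_trichotomy i j with h | h | h
          · simp [h, asymm h, ne_of_lt h]
          · subst h
            simp
          · simp [h, asymm h, ne_of_gt h]
      _ = A := by
          rw [← matrix_eq_sum_single A]
          have : ∑ i : Fin N, ∑ j : Fin N, (if i = j then g i else 0) = 0 := by
            have h1 : ∀ i : Fin N, ∑ j : Fin N, (if i = j then g i else 0) = g i := by
              intro i
              simp
            rw [Finset.sum_congr rfl fun i _ => h1 i]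
            simp only [hg]
            rw [← Finset.sum_smul, htr', zero_smul]
          rw [this, sub_zero]
  rw [← hsum]
  exact Submodule.sum_mem L.toSubmodule fun i _ =>
    Submodule.sum_mem L.toSubmodule fun j _ => hBmem i j
end

section
/- (Lemma 1) Let H₁ = Σ_{n=1}^{N-1} d_n (e_{n,n+1} + e_{n+1,n}) with all d_n ≠ 0 real. If a real Lie subalgebra L of u(N) contains iH₁, x_{12}, and y_{12}, then L contains x_{n,n+1} and y_{n,n+1} for all 1 ≤ n ≤ N-1. -/
set_option maxHeartbeats 1600000

open Matrix Complex Finset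

attribute [local instance 100] LieRing.ofAssociativeRing

lemma e_mul (N a b c d : ℕ) : e N a b * e N c d = if b = c ∧ 1 ≤ b ∧ b ≤ N then e N a d else 0 := by
  ext k l
  by_cases h : b = c ∧ 1 ≤ b ∧ b ≤ N
  · obtain ⟨rfl, hb1, hbN⟩ := h
    rw [if_pos ⟨rfl, hb1, hbN⟩]
    simp only [Matrix.mul_apply, e, of_apply]
    rw [Finset.sum_eq_single (⟨b - 1, by omega⟩ : Fin N)]
    · have hb : (b - 1) + 1 = b := by omega
      by_cases h1 : (k : ℕ) + 1 = a <;> by_cases h2 : (l : ℕ) + 1 = d <;>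
        simp [h1, h2, hb]
    · intro j _ hj
      have : (j : ℕ) + 1 ≠ b := by
        intro hc; apply hj; apply Fin.ext; simp; omega
      simp [this]
    · simp
  · rw [if_neg h]
    simp only [Matrix.mul_apply, e, of_apply, Matrix.zero_apply]
    apply Finset.sum_eq_zero
    intro j _
    by_cases h1 : (j : ℕ) + 1 = b <;> by_cases h2 : (j : ℕ) + 1 = c <;>
      simp [h1, h2] <;> intros <;> omega

lemma xm01 (N : ℕ) : xm N 0 1 = 0 := by
  ext k l; simp [xm, e]

lemma ym01 (N : ℕ) : ym N 0 1 = 0 := by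
  ext k l; simp [ym, e]

lemma csmul {N : ℕ} (r : ℝ) (M : Matrix (Fin N) (Fin N) ℂ) : (r : ℂ) • M = r • M := by
  rw [← algebraMap_smul ℂ r M, Complex.coe_algebraMap]

lemma I1 (N n : ℕ) (h1 : 1 ≤ n) (h2 : n + 1 ≤ N) :
    ⁅xm N n (n+1), ym N n (n+1)⁆ =
      Complex.I • ((e N n n - e N (n+1) (n+1)) + (e N n n - e N (n+1) (n+1))) := by
  simp only [Ring.lie_def, xm, ym, smul_add, mul_smul_comm, smul_mul_assoc, sub_mul, mul_sub,
    mul_add, add_mul, e_mul]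
  split_ifs <;> first | omega | (exfalso; simp only [true_and, not_and, not_le] at *; omega) | module

lemma I3 (N n : ℕ) (h1 : 1 ≤ n) (h2 : n + 2 ≤ N) :
    ⁅xm N n (n+1), xm N (n+1) (n+2)⁆ = xm N n (n+2) := by
  simp only [Ring.lie_def, xm, ym, smul_add, mul_smul_comm, smul_mul_assoc, sub_mul, mul_sub,
    mul_add, add_mul, e_mul]
  split_ifs <;> first | omega | (exfalso; simp only [true_and, not_and, not_le] at *; omega) | module

lemma I4 (N n : ℕ) (h1 : 1 ≤ n) (h2 : n + 2 ≤ N) :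
    ⁅xm N n (n+2), ym N n (n+1)⁆ = -(ym N (n+1) (n+2)) := by
  simp only [Ring.lie_def, xm, ym, smul_add, mul_smul_comm, smul_mul_assoc, sub_mul, mul_sub,
    mul_add, add_mul, e_mul]
  split_ifs <;> first | omega | (exfalso; simp only [true_and, not_and, not_le] at *; omega) | module

lemma Ibr (N n m : ℕ) (h1 : 1 ≤ n) (h2 : n + 2 ≤ N) (hm1 : 1 ≤ m) (hm2 : m + 1 ≤ N) :
    ⁅e N n n - e N (n+1) (n+1), e N m (m+1) + e N (m+1) m⁆ =
      (if m = n - 1 then -(xm N (n-1) n) else 0) +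
      (if m = n then xm N n (n+1) + xm N n (n+1) else 0) +
      (if m = n + 1 then -(xm N (n+1) (n+2)) else 0) := by
  by_cases hA : m = n - 1
  · obtain rfl : n = m + 1 := by omega
    simp only [Nat.add_sub_cancel, Ring.lie_def, xm, sub_mul, mul_sub, mul_add, add_mul, e_mul]
    split_ifs <;> first | omega | (exfalso; simp only [true_and, not_and, not_le] at *; omega) | module
  · by_cases hB : m = n
    · subst hB
      simp only [Ring.lie_def, xm, sub_mul, mul_sub, mul_add, add_mul, e_mul]
      split_ifs <;> first | omega | (exfalso; simp only [true_and, not_and, not_le] at *; omega) | module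
    · by_cases hC : m = n + 1
      · subst hC
        simp only [Ring.lie_def, xm, sub_mul, mul_sub, mul_add, add_mul, e_mul]
        split_ifs <;> first | omega | (exfalso; simp only [true_and, not_and, not_le] at *; omega) | module
      · simp only [Ring.lie_def, xm, sub_mul, mul_sub, mul_add, add_mul, e_mul]
        split_ifs <;> first | omega | (exfalso; simp only [true_and, not_and, not_le] at *; omega) | module

lemma Isum (N n : ℕ) (d : ℕ → ℝ) (h1 : 1 ≤ n) (hn : n + 1 ≤ N - 1) :
    ⁅e N n n - e N (n+1) (n+1), ∑ m ∈ Finset.Icc 1 (N-1), (d m : ℂ) • (e N m (m+1) + e N (m+1) m)⁆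
    = (d (n-1) : ℂ) • -(xm N (n-1) n) + (d n : ℂ) • (xm N n (n+1) + xm N n (n+1))
      + (d (n+1) : ℂ) • -(xm N (n+1) (n+2)) := by
  have h2 : n + 2 ≤ N := by omega
  rw [show ⁅e N n n - e N (n+1) (n+1), ∑ m ∈ Finset.Icc 1 (N-1), (d m : ℂ) • (e N m (m+1) + e N (m+1) m)⁆
      = ∑ m ∈ Finset.Icc 1 (N-1), ⁅e N n n - e N (n+1) (n+1), (d m : ℂ) • (e N m (m+1) + e N (m+1) m)⁆
    from by simp only [Ring.lie_def, Finset.mul_sum, Finset.sum_mul, ← Finset.sum_sub_distrib]]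
  have key : ∀ m ∈ Finset.Icc 1 (N-1),
      ⁅e N n n - e N (n+1) (n+1), (d m : ℂ) • (e N m (m+1) + e N (m+1) m)⁆ =
        (if m = n - 1 then (d m : ℂ) • -(xm N (n-1) n) else 0) +
        (if m = n then (d m : ℂ) • (xm N n (n+1) + xm N n (n+1)) else 0) +
        (if m = n + 1 then (d m : ℂ) • -(xm N (n+1) (n+2)) else 0) := by
    intro m hm
    rw [Finset.mem_Icc] at hm
    rw [lie_smul, Ibr N n m h1 h2 hm.1 (by omega), smul_add, smul_add]
    congr 2 <;> split_ifs <;> simp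
  rw [Finset.sum_congr rfl key, Finset.sum_add_distrib, Finset.sum_add_distrib,
    Finset.sum_ite_eq' _ (n-1), Finset.sum_ite_eq' _ n, Finset.sum_ite_eq' _ (n+1),
    if_pos (show n ∈ Finset.Icc 1 (N-1) by rw [Finset.mem_Icc]; omega),
    if_pos (show n + 1 ∈ Finset.Icc 1 (N-1) by rw [Finset.mem_Icc]; omega)]
  by_cases hc : n - 1 ∈ Finset.Icc 1 (N-1)
  · rw [if_pos hc]
  · rw [if_neg hc]
    rw [Finset.mem_Icc] at hc
    obtain rfl : n = 1 := by omega
    simp [xm01]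

theorem lemma_one (N : ℕ) (d : ℕ → ℝ) (hd : ∀ n, 1 ≤ n → n ≤ N - 1 → d n ≠ 0)
    (L : LieSubalgebra ℝ (Matrix (Fin N) (Fin N) ℂ))
    (hL : ∀ A ∈ L, Aᴴ = -A)
    (hH1 : Complex.I • (∑ n ∈ Finset.Icc 1 (N-1),
              (d n : ℂ) • (e N n (n+1) + e N (n+1) n)) ∈ L)
    (hx : xm N 1 2 ∈ L) (hy : ym N 1 2 ∈ L) :
    ∀ n, 1 ≤ n → n ≤ N - 1 → xm N n (n+1) ∈ L ∧ ym N n (n+1) ∈ L := by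
  have hstep : ∀ n, 1 ≤ n → n + 1 ≤ N - 1 → xm N (n-1) n ∈ L → xm N n (n+1) ∈ L →
      ym N n (n+1) ∈ L → xm N (n+1) (n+2) ∈ L ∧ ym N (n+1) (n+2) ∈ L := by
    intro n h1 hn hxp hxn hyn
    have h2 : n + 2 ≤ N := by omega
    set S := ∑ m ∈ Finset.Icc 1 (N-1), (d m : ℂ) • (e N m (m+1) + e N (m+1) m) with hS
    set T := (d (n-1) : ℂ) • -(xm N (n-1) n) + (d n : ℂ) • (xm N n (n+1) + xm N n (n+1))
      + (d (n+1) : ℂ) • -(xm N (n+1) (n+2)) with hT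
    have hB : ⁅⁅xm N n (n+1), ym N n (n+1)⁆, Complex.I • S⁆ ∈ L :=
      L.lie_mem (L.lie_mem hxn hyn) hH1
    have hBval : ⁅⁅xm N n (n+1), ym N n (n+1)⁆, Complex.I • S⁆ = -(T + T) := by
      rw [I1 N n h1 (by omega), smul_lie, lie_smul, smul_smul, Complex.I_mul_I, add_lie,
        Isum N n d h1 hn, ← hT, neg_one_smul]
    rw [hBval] at hB
    have hTL : T ∈ L := by
      have h := L.smul_mem (-(1/2) : ℝ) hB
      rwa [show (-(1/2) : ℝ) • -(T + T) = T from by module] at h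
    have hfirst : (d (n-1) : ℂ) • -(xm N (n-1) n) ∈ L := by
      rw [csmul]
      exact L.smul_mem _ (neg_mem hxp)
    have hsecond : (d n : ℂ) • (xm N n (n+1) + xm N n (n+1)) ∈ L := by
      rw [csmul]
      exact L.smul_mem _ (add_mem hxn hxn)
    have hthird : (d (n+1) : ℂ) • -(xm N (n+1) (n+2)) ∈ L := by
      have h := sub_mem (sub_mem hTL hfirst) hsecond
      rwa [show T - (d (n-1) : ℂ) • -(xm N (n-1) n) - (d n : ℂ) • (xm N n (n+1) + xm N n (n+1))
        = (d (n+1) : ℂ) • -(xm N (n+1) (n+2)) from by rw [hT]; abel] at h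
    have hdn : d (n+1) ≠ 0 := hd (n+1) (by omega) (by omega)
    have hx' : xm N (n+1) (n+2) ∈ L := by
      have h := L.smul_mem (-(d (n+1))⁻¹ : ℝ) hthird
      rwa [csmul, smul_smul, show (-(d (n+1))⁻¹ * d (n+1) : ℝ) = -1 from by field_simp,
        neg_one_smul, neg_neg] at h
    have hC : xm N n (n+2) ∈ L := by
      rw [← I3 N n h1 h2]
      exact L.lie_mem hxn hx'
    have hy' : ym N (n+1) (n+2) ∈ L := by
      have h := L.lie_mem hC hyn
      rw [I4 N n h1 h2] at h
      have h2' := neg_mem h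
      rwa [neg_neg] at h2'
    exact ⟨hx', hy'⟩
  have main : ∀ n, (n ≤ N - 1 → (xm N n (n+1) ∈ L ∧ ym N n (n+1) ∈ L)) ∧
      (n + 1 ≤ N - 1 → (xm N (n+1) (n+2) ∈ L ∧ ym N (n+1) (n+2) ∈ L)) := by
    intro n
    induction n with
    | zero =>
      constructor
      · intro _
        exact ⟨by rw [show (0:ℕ)+1 = 1 from rfl, xm01]; exact zero_mem L,
               by rw [show (0:ℕ)+1 = 1 from rfl, ym01]; exact zero_mem L⟩
      · intro _
        exact ⟨hx, hy⟩
    | succ k ih =>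
      refine ⟨ih.2, fun hk => ?_⟩
      have hxp : xm N k (k+1) ∈ L := (ih.1 (by omega)).1
      have hxn : xm N (k+1) (k+2) ∈ L := (ih.2 (by omega)).1
      have hyn : ym N (k+1) (k+2) ∈ L := (ih.2 (by omega)).2
      have := hstep (k+1) (by omega) (by omega) (by simpa using hxp) hxn hyn
      exact this
  intro n hn1 hn2
  obtain ⟨m, rfl⟩ : ∃ m, n = m + 1 := ⟨n - 1, by omega⟩
  exact (main m).2 (by omega)
end

section
/- (Lemma 1, mirrored) Let H₁ = Σ_{n=1}^{N-1} d_n (e_{n,n+1} + e_{n+1,n}) with all d_n ≠ 0 real. If a real Lie subalgebra L of u(N) contains iH₁, x_{N-1,N}, and y_{N-1,N}, then L contains x_{n,n+1} and y_{n,n+1} for all 1 ≤ n ≤ N-1. -/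
open Matrix Complex Finset

attribute [local instance 100] LieRing.ofAssociativeRing

section Aux

lemma e_zero_right (N a b : ℕ) (h : N < b) : e N a b = 0 := by
  ext k l
  simp only [e, Matrix.of_apply, Matrix.zero_apply, ite_eq_right_iff]
  rintro ⟨-, h2⟩
  omega

lemma e_zero_left (N a b : ℕ) (h : N < a) : e N a b = 0 := by
  ext k l
  simp only [e, Matrix.of_apply, Matrix.zero_apply, ite_eq_right_iff]
  rintro ⟨h2, -⟩
  omega

noncomputable def s (N n : ℕ) : Matrix (Fin N) (Fin N) ℂ := e N n (n+1) + e N (n+1) n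

lemma xm_zero (N a b : ℕ) (h : N < b) : xm N a b = 0 := by
  rw [xm, e_zero_right _ _ _ h, e_zero_left _ _ _ h, sub_zero]

lemma ym_zero (N a b : ℕ) (h : N < b) : ym N a b = 0 := by
  rw [ym, e_zero_right _ _ _ h, e_zero_left _ _ _ h, add_zero, smul_zero]

set_option maxHeartbeats 1000000

lemma lie_s_s (N n : ℕ) (h1 : 1 ≤ n) (h2 : n + 2 ≤ N) :
    ⁅s N n, s N (n+1)⁆ = xm N n (n+2) := by
  simp only [s, xm, Ring.lie_def, add_mul, mul_add, e_mul, true_and]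
  split_ifs <;> first | omega | abel

lemma lie_s_s_zero (N k m : ℕ) (h1 : k ≠ m + 1) (h2 : m ≠ k + 1) (h3 : k ≠ m) :
    ⁅s N k, s N m⁆ = 0 := by
  simp only [s, Ring.lie_def, add_mul, mul_add, e_mul, true_and]
  split_ifs <;> first | omega | abel

lemma lie_s_x_zero (N k n : ℕ) (h1 : k ≠ n) (h2 : k ≠ n + 1) (h3 : k ≠ n + 2) :
    ⁅s N k, xm N (n+1) (n+2)⁆ = 0 := by
  simp only [s, xm, Ring.lie_def, add_mul, mul_add, sub_mul, mul_sub, e_mul, true_and]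
  split_ifs <;> first | omega | abel

lemma lie_s_x_left (N n : ℕ) (h2 : n + 2 ≤ N) :
    ⁅s N n, xm N (n+1) (n+2)⁆ = e N n (n+2) + e N (n+2) n := by
  simp only [s, xm, Ring.lie_def, add_mul, mul_add, sub_mul, mul_sub, e_mul, true_and]
  split_ifs <;> first | omega | abel

lemma lie_s_x_mid (N n : ℕ) (h2 : n + 2 ≤ N) :
    ⁅s N (n+1), xm N (n+1) (n+2)⁆ = (2:ℂ) • (e N (n+2) (n+2) - e N (n+1) (n+1)) := by
  simp only [s, xm, Ring.lie_def, add_mul, mul_add, sub_mul, mul_sub, e_mul, true_and]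
  split_ifs <;> first | omega | module

lemma lie_s_x_right (N n : ℕ) (h2 : n + 3 ≤ N) :
    ⁅s N (n+2), xm N (n+1) (n+2)⁆ = -(e N (n+1) (n+3) + e N (n+3) (n+1)) := by
  simp only [s, xm, Ring.lie_def, add_mul, mul_add, sub_mul, mul_sub, e_mul, true_and]
  split_ifs <;> first | omega | abel

lemma lie_x_y (N n : ℕ) (h2 : n + 2 ≤ N) :
    ⁅xm N (n+1) (n+2), ym N (n+1) (n+2)⁆ =
      (2:ℂ) • (Complex.I • (e N (n+1) (n+1) - e N (n+2) (n+2))) := by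
  simp only [xm, ym, Ring.lie_def, add_mul, mul_add, sub_mul, mul_sub,
    smul_mul_assoc, mul_smul_comm, e_mul, true_and]
  split_ifs <;> first | omega | module

lemma lie_xs_x (N n : ℕ) (h1 : 1 ≤ n) (h2 : n + 2 ≤ N) :
    ⁅xm N n (n+2), xm N (n+1) (n+2)⁆ = -xm N n (n+1) := by
  simp only [xm, Ring.lie_def, add_mul, mul_add, sub_mul, mul_sub, e_mul, true_and]
  split_ifs <;> first | omega | abel

lemma lie_xs_y (N n : ℕ) (h1 : 1 ≤ n) (h2 : n + 2 ≤ N) :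
    ⁅xm N n (n+2), ym N (n+1) (n+2)⁆ = ym N n (n+1) := by
  simp only [xm, ym, Ring.lie_def, add_mul, mul_add, sub_mul, mul_sub,
    smul_mul_assoc, mul_smul_comm, e_mul, true_and]
  split_ifs <;> first | omega | module

lemma sum_split3 {M : Type*} [AddCommMonoid M] (f : ℕ → M) (lo hi a : ℕ)
    (ha : a ∈ Finset.Icc lo hi) (ha1 : a + 1 ∈ Finset.Icc lo hi)
    (h0 : ∀ k ∈ Finset.Icc lo hi, k ≠ a → k ≠ a + 1 → k ≠ a + 2 → f k = 0) :
    ∑ k ∈ Finset.Icc lo hi, f k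
      = f a + f (a+1) + (if a + 2 ∈ Finset.Icc lo hi then f (a+2) else 0) := by
  have key : ∀ k ∈ Finset.Icc lo hi, f k =
      (if k = a then f k else 0) + (if k = a+1 then f k else 0)
        + (if k = a+2 then f k else 0) := by
    intro k hk
    by_cases h1 : k = a
    · rw [if_pos h1, if_neg (by omega), if_neg (by omega)]; simp
    by_cases h2 : k = a + 1
    · rw [if_neg h1, if_pos h2, if_neg (by omega)]; simp
    by_cases h3 : k = a + 2
    · rw [if_neg h1, if_neg h2, if_pos h3]; simp
    · rw [if_neg h1, if_neg h2, if_neg h3, h0 k hk h1 h2 h3]; simp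
  rw [Finset.sum_congr rfl key, Finset.sum_add_distrib, Finset.sum_add_distrib,
    Finset.sum_ite_eq' _ a f, Finset.sum_ite_eq' _ (a+1) f, Finset.sum_ite_eq' _ (a+2) f,
    if_pos ha, if_pos ha1]

lemma sum_lie' {ι : Type*} {A : Type*} [Ring A] (t : Finset ι) (f : ι → A) (y : A) :
    ⁅∑ i ∈ t, f i, y⁆ = ∑ i ∈ t, ⁅f i, y⁆ := by
  simp [Ring.lie_def, Finset.sum_mul, Finset.mul_sum, Finset.sum_sub_distrib]

lemma key_y (N n : ℕ) (d : ℕ → ℝ) (h1 : 1 ≤ n) (h2 : n + 1 ≤ N - 1) :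
    ⁅Complex.I • ∑ k ∈ Finset.Icc 1 (N-1), (d k : ℂ) • s N k, ym N (n+1) (n+2)⁆
      = -((d n : ℂ) • xm N n (n+2)) + (d (n+2) : ℂ) • xm N (n+1) (n+3) := by
  have hN : n + 2 ≤ N := by omega
  rw [show ym N (n+1) (n+2) = Complex.I • s N (n+1) from rfl, smul_lie, lie_smul, sum_lie']
  simp only [smul_lie]
  rw [sum_split3 (fun k => (d k : ℂ) • ⁅s N k, s N (n+1)⁆) 1 (N-1) n
    (by simp; omega) (by simp; omega)
    (by intro k hk hk1 hk2 hk3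
        show (d k : ℂ) • ⁅s N k, s N (n+1)⁆ = 0
        rw [lie_s_s_zero N k (n+1) (by omega) (by omega) (by omega), smul_zero])]
  rw [lie_s_s N n h1 hN, lie_self, smul_zero, add_zero]
  by_cases hc : n + 2 ∈ Finset.Icc 1 (N-1)
  · rw [if_pos hc]
    have h3 : n + 3 ≤ N := by simp at hc; omega
    rw [show ⁅s N (n+2), s N (n+1)⁆ = -xm N (n+1) (n+3) by
      rw [← lie_skew, lie_s_s N (n+1) (by omega) h3]]
    rw [smul_smul, Complex.I_mul_I]
    module
  · rw [if_neg hc]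
    have h3 : N < n + 3 := by simp at hc; omega
    rw [xm_zero N (n+1) (n+3) h3, smul_smul, Complex.I_mul_I, smul_zero, add_zero]
    module

lemma key_x (N n : ℕ) (d : ℕ → ℝ) (h1 : 1 ≤ n) (h2 : n + 1 ≤ N - 1) :
    ⁅Complex.I • ∑ k ∈ Finset.Icc 1 (N-1), (d k : ℂ) • s N k, xm N (n+1) (n+2)⁆
      = (d n : ℂ) • ym N n (n+2)
        - (d (n+1) : ℂ) • ⁅xm N (n+1) (n+2), ym N (n+1) (n+2)⁆
        - (d (n+2) : ℂ) • ym N (n+1) (n+3) := by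
  have hN : n + 2 ≤ N := by omega
  rw [smul_lie, sum_lie']
  simp only [smul_lie]
  rw [sum_split3 (fun k => (d k : ℂ) • ⁅s N k, xm N (n+1) (n+2)⁆) 1 (N-1) n
    (by simp; omega) (by simp; omega)
    (by intro k hk hk1 hk2 hk3
        show (d k : ℂ) • ⁅s N k, xm N (n+1) (n+2)⁆ = 0
        rw [lie_s_x_zero N k n hk1 hk2 hk3, smul_zero])]
  rw [lie_s_x_left N n hN, lie_s_x_mid N n hN, lie_x_y N n hN]
  by_cases hc : n + 2 ∈ Finset.Icc 1 (N-1)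
  · rw [if_pos hc]
    have h3 : n + 3 ≤ N := by simp at hc; omega
    rw [lie_s_x_right N n h3]
    simp only [ym]
    module
  · rw [if_neg hc]
    have h3 : N < n + 3 := by simp at hc; omega
    rw [ym_zero N (n+1) (n+3) h3]
    simp only [ym, smul_zero]
    module

lemma real_smul_eq {N : ℕ} (r : ℝ) (M : Matrix (Fin N) (Fin N) ℂ) :
    r • M = (r : ℂ) • M := by
  ext k l
  simp [Matrix.smul_apply, Complex.real_smul]

end Aux

theorem lemma_one_mirrored (N : ℕ) (d : ℕ → ℝ) (hd : ∀ n, 1 ≤ n → n ≤ N - 1 → d n ≠ 0)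
    (L : LieSubalgebra ℝ (Matrix (Fin N) (Fin N) ℂ))
    (hL : ∀ A ∈ L, Aᴴ = -A)
    (hH1 : Complex.I • (∑ n ∈ Finset.Icc 1 (N-1),
              (d n : ℂ) • (e N n (n+1) + e N (n+1) n)) ∈ L)
    (hx : xm N (N-1) N ∈ L) (hy : ym N (N-1) N ∈ L) :
    ∀ n, 1 ≤ n → n ≤ N - 1 → xm N n (n+1) ∈ L ∧ ym N n (n+1) ∈ L := by
  have hA : Complex.I • ∑ k ∈ Finset.Icc 1 (N-1), (d k : ℂ) • s N k ∈ L := hH1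
  set A := Complex.I • ∑ k ∈ Finset.Icc 1 (N-1), (d k : ℂ) • s N k with hAdef
  -- base case: n = N - 1
  have hbase : ∀ n, 1 ≤ n → n = N - 1 →
      xm N n (n+1) ∈ L ∧ ym N n (n+1) ∈ L ∧ xm N n (n+2) ∈ L ∧ ym N n (n+2) ∈ L := by
    intro n h1 h2
    have hN : 2 ≤ N := by omega
    subst h2
    have e1 : N - 1 + 1 = N := by omega
    have e2 : N < N - 1 + 2 := by omega
    rw [e1]
    exact ⟨hx, hy, by rw [xm_zero N _ _ e2]; exact L.zero_mem,
      by rw [ym_zero N _ _ e2]; exact L.zero_mem⟩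
  -- main downward induction
  suffices H : ∀ m n, 1 ≤ n → n ≤ N - 1 → N - 1 ≤ n + m →
      xm N n (n+1) ∈ L ∧ ym N n (n+1) ∈ L ∧ xm N n (n+2) ∈ L ∧ ym N n (n+2) ∈ L by
    intro n h1 h2
    exact ⟨(H (N-1) n h1 h2 (by omega)).1, (H (N-1) n h1 h2 (by omega)).2.1⟩
  intro m
  induction m with
  | zero =>
    intro n h1 h2 h3
    exact hbase n h1 (by omega)
  | succ m ih =>
    intro n h1 h2 h3
    by_cases hc : n = N - 1
    · exact hbase n h1 hc
    · have h4 : n + 1 ≤ N - 1 := by omega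
      have hN : n + 2 ≤ N := by omega
      obtain ⟨ihx, ihy, ihxs, ihys⟩ := ih (n+1) (by omega) h4 (by omega)
      have hdn : (d n : ℂ) ≠ 0 := Complex.ofReal_ne_zero.mpr (hd n h1 (by omega))
      -- x skip: xm N n (n+2) ∈ L
      have hkx : (d n : ℂ) • xm N n (n+2)
          = (d (n+2) : ℂ) • xm N (n+1) (n+3) - ⁅A, ym N (n+1) (n+2)⁆ := by
        rw [hAdef, key_y N n d h1 h4]
        module
      have hxs : xm N n (n+2) ∈ L := by
        have hmem : ((d n)⁻¹ : ℝ) • ((d (n+2) : ℝ) • xm N (n+1) (n+3)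
            - ⁅A, ym N (n+1) (n+2)⁆) ∈ L :=
          L.smul_mem _ (L.sub_mem (L.smul_mem _ ihxs) (L.lie_mem hA ihy))
        rwa [real_smul_eq, real_smul_eq, Complex.ofReal_inv, ← hkx,
          inv_smul_smul₀ hdn] at hmem
      -- y skip: ym N n (n+2) ∈ L
      have hky : (d n : ℂ) • ym N n (n+2)
          = ⁅A, xm N (n+1) (n+2)⁆
            + (d (n+1) : ℂ) • ⁅xm N (n+1) (n+2), ym N (n+1) (n+2)⁆
            + (d (n+2) : ℂ) • ym N (n+1) (n+3) := by
        rw [hAdef, key_x N n d h1 h4]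
        module
      have hys : ym N n (n+2) ∈ L := by
        have hmem : ((d n)⁻¹ : ℝ) • (⁅A, xm N (n+1) (n+2)⁆
            + (d (n+1) : ℝ) • ⁅xm N (n+1) (n+2), ym N (n+1) (n+2)⁆
            + (d (n+2) : ℝ) • ym N (n+1) (n+3)) ∈ L :=
          L.smul_mem _ (L.add_mem (L.add_mem (L.lie_mem hA ihx)
            (L.smul_mem _ (L.lie_mem ihx ihy))) (L.smul_mem _ ihys))
        rwa [real_smul_eq, real_smul_eq, real_smul_eq, Complex.ofReal_inv, ← hky,
          inv_smul_smul₀ hdn] at hmem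
      -- descend to level n
      refine ⟨?_, ?_, hxs, hys⟩
      · have : xm N n (n+1) = (-1 : ℝ) • ⁅xm N n (n+2), xm N (n+1) (n+2)⁆ := by
          rw [lie_xs_x N n h1 hN, real_smul_eq]
          module
        rw [this]
        exact L.smul_mem _ (L.lie_mem hxs ihx)
      · have : ym N n (n+1) = ⁅xm N n (n+2), ym N (n+1) (n+2)⁆ :=
          (lie_xs_y N n h1 hN).symm
        rw [this]
        exact L.lie_mem hxs ihy
end

section
/- (Theorem 4) Suppose H₀ = Σ E_n e_{nn} has equally spaced levels μ_n = μ ≠ 0 and H₁ = Σ d_n(e_{n,n+1}+e_{n+1,n}) with all d_n ≠ 0 satisfies v_n = v for all 1 ≤ n ≤ N-1, where v_n = 2d_n² - d_{n-1}² - d_{n+1}² (d_0 = d_N = 0). Then the real Lie algebra generated by iH₀ and iH₁ is spanned by the four matrices iH₀, X = Σ d_n x_{n,n+1}, Y = iH₁, and Z = i Σ (d_n² - d_{n-1}²) e_{nn}; in particular its dimension is at most 4, so for N > 2 the system is not completely controllable. -/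
open Matrix Complex Finset

attribute [local instance] LieRing.ofAssociativeRing

/-! ### Auxiliary machinery -/

def fd (d : ℕ → ℝ) (i j : ℕ) : ℝ :=
  if j = i+1 then d i else if i = j+1 then d j else 0
def fx (d : ℕ → ℝ) (i j : ℕ) : ℝ :=
  if j = i+1 then d i else if i = j+1 then -d j else 0

section Aux
variable {N : ℕ} (E d : ℕ → ℝ)

lemma sumEq (c : ℕ) (x : ℂ) :
    (∑ m : Fin N, if (m:ℕ) = c then x else 0) = if c < N then x else 0 := by
  split_ifs with h
  · rw [Finset.sum_eq_single_of_mem (⟨c, h⟩ : Fin N) (Finset.mem_univ _)]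
    · simp
    · intro b _ hb; rw [if_neg (fun hc => hb (Fin.ext hc))]
  · apply Finset.sum_eq_zero; intro m _
    rw [if_neg]; intro hc; have := m.isLt; omega

lemma sumEq' (c : ℕ) (x : ℂ) :
    (∑ m : Fin N, if (m:ℕ) + 1 = c then x else 0) = if 1 ≤ c ∧ c ≤ N then x else 0 := by
  split_ifs with h
  · rw [Finset.sum_eq_single_of_mem (⟨c-1, by omega⟩ : Fin N) (Finset.mem_univ _)]
    · rw [if_pos]; simp; omega
    · intro b _ hb; rw [if_neg]; intro hc; exact hb (Fin.ext (by simp; omega))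
  · apply Finset.sum_eq_zero; intro m _
    rw [if_neg]; intro hc; have := m.isLt; omega

lemma H0_apply (k l : Fin N) :
    (∑ n ∈ Finset.Icc 1 N, (E n : ℂ) • e N n n) k l
      = if k = l then (E ((k:ℕ)+1) : ℂ) else 0 := by
  have hk := k.isLt
  simp only [Matrix.sum_apply, Matrix.smul_apply, e, Matrix.of_apply, smul_eq_mul]
  by_cases h : k = l
  · subst h
    rw [Finset.sum_eq_single_of_mem ((k:ℕ)+1) (by simp [Finset.mem_Icc])]
    · simp
    · intro b _ hb; simp [Ne.symm hb]
  · rw [if_neg h]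
    apply Finset.sum_eq_zero
    intro n _
    rw [if_neg, mul_zero]
    rintro ⟨h1, h2⟩
    exact h (Fin.ext (by omega))

lemma H1_apply (k l : Fin N) :
    (∑ n ∈ Finset.Icc 1 (N-1), (d n : ℂ) • (e N n (n+1) + e N (n+1) n)) k l
      = (fd d ((k:ℕ)+1) ((l:ℕ)+1) : ℝ) := by
  have hk := k.isLt
  have hl := l.isLt
  simp only [Matrix.sum_apply, Matrix.smul_apply, Matrix.add_apply, e, Matrix.of_apply,
    smul_eq_mul, fd]
  by_cases h1 : (l:ℕ) = (k:ℕ)+1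
  · rw [if_pos (by omega)]
    rw [Finset.sum_eq_single_of_mem ((k:ℕ)+1)
        (by simp [Finset.mem_Icc]; omega)]
    · rw [if_pos (by omega), if_neg (by omega)]; ring
    · intro b _ hb
      rw [if_neg (by omega), if_neg (by omega)]; ring
  · rw [if_neg (by omega)]
    by_cases h2 : (k:ℕ) = (l:ℕ)+1
    · rw [if_pos (by omega)]
      rw [Finset.sum_eq_single_of_mem ((l:ℕ)+1)
          (by simp [Finset.mem_Icc]; omega)]
      · rw [if_neg (by omega), if_pos (by omega)]; ring
      · intro b _ hb
        rw [if_neg (by omega), if_neg (by omega)]; ring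
    · rw [if_neg (by omega)]
      push_cast
      apply Finset.sum_eq_zero
      intro n _
      rw [if_neg (by omega), if_neg (by omega)]; ring

lemma X_apply (k l : Fin N) :
    (∑ n ∈ Finset.Icc 1 (N-1), (d n : ℝ) • xm N n (n+1)) k l
      = (fx d ((k:ℕ)+1) ((l:ℕ)+1) : ℝ) := by
  have hk := k.isLt
  have hl := l.isLt
  simp only [Matrix.sum_apply, Matrix.smul_apply, xm, Matrix.sub_apply, e, Matrix.of_apply, fx]
  by_cases h1 : (l:ℕ) = (k:ℕ)+1
  · rw [if_pos (by omega)]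
    rw [Finset.sum_eq_single_of_mem ((k:ℕ)+1)
        (by simp [Finset.mem_Icc]; omega)]
    · rw [if_pos (by omega), if_neg (by omega)]; simp
    · intro b _ hb
      rw [if_neg (by omega), if_neg (by omega)]; simp
  · rw [if_neg (by omega)]
    by_cases h2 : (k:ℕ) = (l:ℕ)+1
    · rw [if_pos (by omega)]
      rw [Finset.sum_eq_single_of_mem ((l:ℕ)+1)
          (by simp [Finset.mem_Icc]; omega)]
      · rw [if_neg (by omega), if_pos (by omega)]; push_cast; simp
      · intro b _ hb
        rw [if_neg (by omega), if_neg (by omega)]; simp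
    · rw [if_neg (by omega)]
      push_cast
      apply Finset.sum_eq_zero
      intro n _
      rw [if_neg (by omega), if_neg (by omega)]; simp

lemma Zd_apply (k l : Fin N) :
    (∑ n ∈ Finset.Icc 1 N, ((d n ^ 2 - d (n-1) ^ 2 : ℝ) : ℂ) • e N n n) k l
      = if k = l then ((d ((k:ℕ)+1) ^ 2 - d (k:ℕ) ^ 2 : ℝ) : ℂ) else 0 := by
  have hk := k.isLt
  simp only [Matrix.sum_apply, Matrix.smul_apply, e, Matrix.of_apply, smul_eq_mul]
  by_cases h : k = l
  · subst h
    rw [Finset.sum_eq_single_of_mem ((k:ℕ)+1) (by simp [Finset.mem_Icc])]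
    · simp
    · intro b _ hb; simp [Ne.symm hb]
  · rw [if_neg h]
    apply Finset.sum_eq_zero
    intro n _
    rw [if_neg, mul_zero]
    rintro ⟨h1, h2⟩
    exact h (Fin.ext (by omega))

lemma diag_lie (A M : Matrix (Fin N) (Fin N) ℂ) (f : Fin N → ℂ)
    (hA : ∀ k l, A k l = if k = l then f k else 0) (k l : Fin N) :
    ⁅A, M⁆ k l = (f k - f l) * M k l := by
  rw [Ring.lie_def]
  simp only [Matrix.sub_apply, Matrix.mul_apply]
  rw [Finset.sum_eq_single_of_mem k (Finset.mem_univ _)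
      (fun b _ hb => by rw [hA, if_neg (Ne.symm hb), zero_mul]),
    Finset.sum_eq_single_of_mem l (Finset.mem_univ _)
      (fun b _ hb => by rw [hA, if_neg hb, mul_zero])]
  rw [hA, hA, if_pos rfl, if_pos rfl]
  ring

lemma trid_mul (p q : ℕ → ℝ) (g : ℕ → ℕ → ℝ) (A M : Matrix (Fin N) (Fin N) ℂ)
    (hpN : p N = 0) (hq0 : q 0 = 0)
    (hA : ∀ k l : Fin N, A k l =
      ((if (l:ℕ) = (k:ℕ)+1 then p ((k:ℕ)+1) else if (k:ℕ) = (l:ℕ)+1 then q (k:ℕ) else 0 : ℝ) : ℂ))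
    (hM : ∀ k l : Fin N, M k l = ((g ((k:ℕ)+1) ((l:ℕ)+1) : ℝ) : ℂ)) (k l : Fin N) :
    (A * M) k l = ((p ((k:ℕ)+1) * g ((k:ℕ)+1+1) ((l:ℕ)+1)
        + q (k:ℕ) * g (k:ℕ) ((l:ℕ)+1) : ℝ) : ℂ) := by
  have hk := k.isLt
  rw [Matrix.mul_apply]
  have key : ∀ m : Fin N, A k m * M m l =
      (if (m:ℕ) = (k:ℕ)+1 then ((p ((k:ℕ)+1) * g ((k:ℕ)+1+1) ((l:ℕ)+1) : ℝ) : ℂ) else 0)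
      + (if (m:ℕ)+1 = (k:ℕ) then ((q (k:ℕ) * g (k:ℕ) ((l:ℕ)+1) : ℝ) : ℂ) else 0) := by
    intro m
    rw [hA, hM]
    by_cases hm1 : (m:ℕ) = (k:ℕ)+1
    · rw [hm1, if_pos rfl, if_pos rfl, if_neg (by omega)]
      push_cast; ring
    · by_cases hm2 : (m:ℕ)+1 = (k:ℕ)
      · rw [if_neg hm1, if_pos (by omega), if_neg hm1, if_pos hm2, hm2]
        push_cast; ring
      · rw [if_neg hm1, if_neg (by omega), if_neg hm1, if_neg hm2]
        push_cast; ring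
  rw [Finset.sum_congr rfl (fun m _ => key m), Finset.sum_add_distrib, sumEq, sumEq']
  by_cases h1 : (k:ℕ)+1 < N <;> by_cases h2 : 1 ≤ (k:ℕ)
  · rw [if_pos h1, if_pos ⟨h2, by omega⟩]; push_cast; ring
  · rw [if_pos h1, if_neg (by omega), show (k:ℕ) = 0 from by omega, hq0]; push_cast; ring
  · rw [if_neg h1, if_pos ⟨h2, by omega⟩, show (k:ℕ)+1 = N from by omega, hpN]; push_cast; ring
  · rw [if_neg h1, if_neg (by omega), show (k:ℕ)+1 = N from by omega, hpN,
      show (k:ℕ) = 0 from by omega, hq0]; push_cast; ring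

lemma keyXY (a b : ℕ) :
    (d (a+1) * fd d (a+1+1) (b+1) + (-d a) * fd d a (b+1))
      - (d (a+1) * fx d (a+1+1) (b+1) + d a * fx d a (b+1))
      = if a = b then 2*(d (a+1)^2 - d a^2) else 0 := by
  unfold fd fx
  split_ifs <;> (try (exfalso; omega)) <;> subst_vars <;> ring

lemma mem_span_four {M : Type*} [AddCommGroup M] [Module ℝ M] {w x y z A : M}
    (h : A ∈ Submodule.span ℝ ({w, x, y, z} : Set M)) :
    ∃ a b c t : ℝ, A = a • w + (b • x + (c • y + t • z)) := by
  rw [Submodule.mem_span_insert] at h; obtain ⟨a, A1, h1, rfl⟩ := h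
  rw [Submodule.mem_span_insert] at h1; obtain ⟨b, A2, h2, rfl⟩ := h1
  rw [Submodule.mem_span_insert] at h2; obtain ⟨c, A3, h3, rfl⟩ := h2
  rw [Submodule.mem_span_singleton] at h3; obtain ⟨t, rfl⟩ := h3
  exact ⟨a, b, c, t, rfl⟩

end Aux

theorem theorem_four (N : ℕ) (E d : ℕ → ℝ) (μ v : ℝ) (hμ : μ ≠ 0)
    (hspacing : ∀ n, 1 ≤ n → n ≤ N - 1 → E (n+1) - E n = μ)
    (hd : ∀ n, 1 ≤ n → n ≤ N - 1 → d n ≠ 0)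
    (hd0 : d 0 = 0) (hdN : d N = 0)
    (hv : ∀ n, 1 ≤ n → n ≤ N - 1 → 2 * d n ^ 2 - d (n-1) ^ 2 - d (n+1) ^ 2 = v) :
    let H₀ : Matrix (Fin N) (Fin N) ℂ := ∑ n ∈ Finset.Icc 1 N, (E n : ℂ) • e N n n
    let H₁ : Matrix (Fin N) (Fin N) ℂ :=
      ∑ n ∈ Finset.Icc 1 (N-1), (d n : ℂ) • (e N n (n+1) + e N (n+1) n)
    let X : Matrix (Fin N) (Fin N) ℂ := ∑ n ∈ Finset.Icc 1 (N-1), (d n : ℝ) • xm N n (n+1)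
    let Y : Matrix (Fin N) (Fin N) ℂ := Complex.I • H₁
    let Z : Matrix (Fin N) (Fin N) ℂ :=
      Complex.I • (∑ n ∈ Finset.Icc 1 N, ((d n ^ 2 - d (n-1) ^ 2 : ℝ) : ℂ) • e N n n)
    let L := LieSubalgebra.lieSpan ℝ (Matrix (Fin N) (Fin N) ℂ)
               {Complex.I • H₀, Complex.I • H₁}
    (∀ A : Matrix (Fin N) (Fin N) ℂ, A ∈ L ↔
        A ∈ Submodule.span ℝ ({Complex.I • H₀, X, Y, Z} : Set (Matrix (Fin N) (Fin N) ℂ))) ∧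
    (2 < N → ¬ (∀ A : Matrix (Fin N) (Fin N) ℂ, Aᴴ = -A → A ∈ L)) := by
  intro H₀ H₁ X Y Z L
  have hH0app : ∀ k l : Fin N, H₀ k l = if k = l then ((E ((k:ℕ)+1) : ℝ) : ℂ) else 0 :=
    fun k l => H0_apply E k l
  have hH1app : ∀ k l : Fin N, H₁ k l = ((fd d ((k:ℕ)+1) ((l:ℕ)+1) : ℝ) : ℂ) :=
    fun k l => H1_apply d k l
  have hXapp : ∀ k l : Fin N, X k l = ((fx d ((k:ℕ)+1) ((l:ℕ)+1) : ℝ) : ℂ) :=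
    fun k l => X_apply d k l
  have hDapp : ∀ k l : Fin N,
      (∑ n ∈ Finset.Icc 1 N, ((d n ^ 2 - d (n-1) ^ 2 : ℝ) : ℂ) • e N n n) k l
        = if k = l then ((d ((k:ℕ)+1) ^ 2 - d (k:ℕ) ^ 2 : ℝ) : ℂ) else 0 :=
    fun k l => Zd_apply d k l
  have hZdef : Z = Complex.I •
      (∑ n ∈ Finset.Icc 1 N, ((d n ^ 2 - d (n-1) ^ 2 : ℝ) : ℂ) • e N n n) := rfl
  have hYdef : Y = Complex.I • H₁ := rfl
  have hYapp : ∀ k l : Fin N, Y k l = Complex.I * ((fd d ((k:ℕ)+1) ((l:ℕ)+1) : ℝ) : ℂ) :=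
    fun k l => by rw [hYdef, Matrix.smul_apply, hH1app k l, smul_eq_mul]
  have hZapp : ∀ k l : Fin N, Z k l
      = Complex.I * (if k = l then ((d ((k:ℕ)+1) ^ 2 - d (k:ℕ) ^ 2 : ℝ) : ℂ) else 0) :=
    fun k l => by rw [hZdef, Matrix.smul_apply, hDapp k l, smul_eq_mul]
  -- bracket relations
  have hB1 : ⁅Complex.I • H₀, X⁆ = (-μ) • Y := by
    ext k l
    have hk := k.isLt; have hl := l.isLt
    rw [smul_lie, Matrix.smul_apply,
      diag_lie H₀ X (fun k => ((E ((k:ℕ)+1) : ℝ) : ℂ)) hH0app k l, hXapp k l,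
      Matrix.smul_apply, hYapp k l, Complex.real_smul, smul_eq_mul]
    have hr : (E ((k:ℕ)+1) - E ((l:ℕ)+1)) * fx d ((k:ℕ)+1) ((l:ℕ)+1)
        = -μ * fd d ((k:ℕ)+1) ((l:ℕ)+1) := by
      unfold fd fx
      split_ifs with h1 h2
      · have hs := hspacing ((k:ℕ)+1) (by omega) (by omega)
        rw [show (l:ℕ)+1 = (k:ℕ)+1+1 from h1]
        linear_combination (-(d ((k:ℕ)+1))) * hs
      · have hs := hspacing ((l:ℕ)+1) (by omega) (by omega)
        rw [show (k:ℕ)+1 = (l:ℕ)+1+1 from h2]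
        linear_combination (-(d ((l:ℕ)+1))) * hs
      · ring
    have hrC := congrArg (Complex.ofReal) hr
    push_cast at hrC ⊢
    linear_combination Complex.I * hrC
  have hB2 : ⁅Complex.I • H₀, Y⁆ = μ • X := by
    ext k l
    have hk := k.isLt; have hl := l.isLt
    rw [hYdef, lie_smul, smul_lie, smul_smul, Complex.I_mul_I, neg_one_smul,
      Matrix.neg_apply, diag_lie H₀ H₁ (fun k => ((E ((k:ℕ)+1) : ℝ) : ℂ)) hH0app k l,
      hH1app k l, Matrix.smul_apply, hXapp k l, Complex.real_smul]
    have hr : (E ((k:ℕ)+1) - E ((l:ℕ)+1)) * fd d ((k:ℕ)+1) ((l:ℕ)+1)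
        = -μ * fx d ((k:ℕ)+1) ((l:ℕ)+1) := by
      unfold fd fx
      split_ifs with h1 h2
      · have hs := hspacing ((k:ℕ)+1) (by omega) (by omega)
        rw [show (l:ℕ)+1 = (k:ℕ)+1+1 from h1]
        linear_combination (-(d ((k:ℕ)+1))) * hs
      · have hs := hspacing ((l:ℕ)+1) (by omega) (by omega)
        rw [show (k:ℕ)+1 = (l:ℕ)+1+1 from h2]
        linear_combination (d ((l:ℕ)+1)) * hs
      · ring
    have hrC := congrArg (Complex.ofReal) hr
    push_cast at hrC ⊢
    linear_combination (-1 : ℂ) * hrC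
  have hB3 : ⁅Complex.I • H₀, Z⁆ = 0 := by
    ext k l
    rw [hZdef, smul_lie, lie_smul, smul_smul, Matrix.smul_apply,
      diag_lie H₀ _ (fun k => ((E ((k:ℕ)+1) : ℝ) : ℂ)) hH0app k l, hDapp k l,
      Matrix.zero_apply]
    by_cases h : k = l
    · rw [if_pos h, h]; simp
    · rw [if_neg h]; simp
  -- products for B4
  have hXtrid : ∀ k l : Fin N, X k l = ((if (l:ℕ) = (k:ℕ)+1 then d ((k:ℕ)+1)
      else if (k:ℕ) = (l:ℕ)+1 then -d (k:ℕ) else 0 : ℝ) : ℂ) := by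
    intro k l; rw [hXapp k l]
    congr 1
    unfold fx
    split_ifs <;> (try (exfalso; omega)) <;> try rfl
    rw [show (l:ℕ)+1 = (k:ℕ) from by omega]
  have hH1trid : ∀ k l : Fin N, H₁ k l = ((if (l:ℕ) = (k:ℕ)+1 then d ((k:ℕ)+1)
      else if (k:ℕ) = (l:ℕ)+1 then d (k:ℕ) else 0 : ℝ) : ℂ) := by
    intro k l; rw [hH1app k l]
    congr 1
    unfold fd
    split_ifs <;> (try (exfalso; omega)) <;> try rfl
    rw [show (l:ℕ)+1 = (k:ℕ) from by omega]
  have hXH1 := trid_mul (N := N) d (fun i => -d i) (fd d) X H₁ hdN (by show -d 0 = 0; rw [hd0, neg_zero])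
    hXtrid hH1app
  have hH1X := trid_mul (N := N) d d (fx d) H₁ X hdN hd0 hH1trid hXapp
  have hbr : ∀ k l : Fin N, ⁅X, H₁⁆ k l
      = if k = l then ((2*(d ((k:ℕ)+1)^2 - d (k:ℕ)^2) : ℝ) : ℂ) else 0 := by
    intro k l
    rw [Ring.lie_def, Matrix.sub_apply, hXH1 k l, hH1X k l]
    have hr := keyXY d (k:ℕ) (l:ℕ)
    by_cases h : k = l
    · rw [if_pos (show (k:ℕ) = (l:ℕ) from by rw [h])] at hr
      rw [if_pos h]
      have hrC := congrArg (Complex.ofReal) hr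
      push_cast at hrC ⊢
      linear_combination hrC
    · rw [if_neg (fun hc : (k:ℕ) = (l:ℕ) => h (Fin.ext hc))] at hr
      rw [if_neg h]
      have hrC := congrArg (Complex.ofReal) hr
      push_cast at hrC ⊢
      linear_combination hrC
  have hB4 : ⁅X, Y⁆ = (2:ℝ) • Z := by
    have h1 : ⁅X, Y⁆ = Complex.I • ⁅X, H₁⁆ := by rw [hYdef, lie_smul]
    ext k l
    rw [h1, Matrix.smul_apply, hbr k l, Matrix.smul_apply, hZapp k l, Complex.real_smul,
      smul_eq_mul]
    by_cases h : k = l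
    · rw [if_pos h, if_pos h]; push_cast; ring
    · rw [if_neg h, if_neg h]; push_cast; ring
  have hB5 : ⁅Z, X⁆ = v • Y := by
    ext k l
    have hk := k.isLt; have hl := l.isLt
    rw [hZdef, smul_lie, Matrix.smul_apply,
      diag_lie _ X (fun k => ((d ((k:ℕ)+1)^2 - d (k:ℕ)^2 : ℝ) : ℂ)) hDapp k l, hXapp k l,
      Matrix.smul_apply, hYapp k l, Complex.real_smul, smul_eq_mul]
    have hr : ((d ((k:ℕ)+1)^2 - d (k:ℕ)^2) - (d ((l:ℕ)+1)^2 - d (l:ℕ)^2))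
          * fx d ((k:ℕ)+1) ((l:ℕ)+1) = v * fd d ((k:ℕ)+1) ((l:ℕ)+1) := by
      unfold fd fx
      split_ifs with h1 h2
      · have hs := hv ((k:ℕ)+1) (by omega) (by omega)
        rw [Nat.add_sub_cancel] at hs
        rw [show (l:ℕ)+1 = (k:ℕ)+1+1 from h1, show (l:ℕ) = (k:ℕ)+1 from by omega]
        linear_combination (d ((k:ℕ)+1)) * hs
      · have hs := hv ((l:ℕ)+1) (by omega) (by omega)
        rw [Nat.add_sub_cancel] at hs
        rw [show (k:ℕ)+1 = (l:ℕ)+1+1 from h2, show (k:ℕ) = (l:ℕ)+1 from by omega]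
        linear_combination (d ((l:ℕ)+1)) * hs
      · ring
    have hrC := congrArg (Complex.ofReal) hr
    push_cast at hrC ⊢
    linear_combination Complex.I * hrC
  have hB6 : ⁅Z, Y⁆ = (-v) • X := by
    ext k l
    have hk := k.isLt; have hl := l.isLt
    rw [hZdef, hYdef, smul_lie, lie_smul, smul_smul, Complex.I_mul_I, neg_one_smul,
      Matrix.neg_apply,
      diag_lie _ H₁ (fun k => ((d ((k:ℕ)+1)^2 - d (k:ℕ)^2 : ℝ) : ℂ)) hDapp k l, hH1app k l,
      Matrix.smul_apply, hXapp k l, Complex.real_smul]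
    have hr : ((d ((k:ℕ)+1)^2 - d (k:ℕ)^2) - (d ((l:ℕ)+1)^2 - d (l:ℕ)^2))
          * fd d ((k:ℕ)+1) ((l:ℕ)+1) = v * fx d ((k:ℕ)+1) ((l:ℕ)+1) := by
      unfold fd fx
      split_ifs with h1 h2
      · have hs := hv ((k:ℕ)+1) (by omega) (by omega)
        rw [Nat.add_sub_cancel] at hs
        rw [show (l:ℕ)+1 = (k:ℕ)+1+1 from h1, show (l:ℕ) = (k:ℕ)+1 from by omega]
        linear_combination (d ((k:ℕ)+1)) * hs
      · have hs := hv ((l:ℕ)+1) (by omega) (by omega)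
        rw [Nat.add_sub_cancel] at hs
        rw [show (k:ℕ)+1 = (l:ℕ)+1+1 from h2, show (k:ℕ) = (l:ℕ)+1 from by omega]
        linear_combination (-(d ((l:ℕ)+1))) * hs
      · ring
    have hrC := congrArg (Complex.ofReal) hr
    push_cast at hrC ⊢
    linear_combination (-1 : ℂ) * hrC
  -- span and closure
  set S : Submodule ℝ (Matrix (Fin N) (Fin N) ℂ) :=
    Submodule.span ℝ ({Complex.I • H₀, X, Y, Z} : Set (Matrix (Fin N) (Fin N) ℂ)) with hSdef
  have hG0S : Complex.I • H₀ ∈ S := Submodule.subset_span (Set.mem_insert _ _)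
  have hXS : X ∈ S := Submodule.subset_span (Set.mem_insert_of_mem _ (Set.mem_insert _ _))
  have hYS : Y ∈ S := Submodule.subset_span
    (Set.mem_insert_of_mem _ (Set.mem_insert_of_mem _ (Set.mem_insert _ _)))
  have hZS : Z ∈ S := Submodule.subset_span
    (Set.mem_insert_of_mem _ (Set.mem_insert_of_mem _ (Set.mem_insert_of_mem _ rfl)))
  have hgen : ∀ g ∈ ({Complex.I • H₀, X, Y, Z} : Set (Matrix (Fin N) (Fin N) ℂ)),
      ∀ g' ∈ ({Complex.I • H₀, X, Y, Z} : Set (Matrix (Fin N) (Fin N) ℂ)), ⁅g, g'⁆ ∈ S := by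
    intro g hg g' hg'
    simp only [Set.mem_insert_iff, Set.mem_singleton_iff] at hg hg'
    rcases hg with rfl | rfl | rfl | rfl <;> rcases hg' with rfl | rfl | rfl | rfl
    · rw [lie_self]; exact S.zero_mem
    · rw [hB1]; exact S.smul_mem _ hYS
    · rw [hB2]; exact S.smul_mem _ hXS
    · rw [hB3]; exact S.zero_mem
    · rw [← lie_skew, hB1]; exact S.neg_mem (S.smul_mem _ hYS)
    · rw [lie_self]; exact S.zero_mem
    · rw [hB4]; exact S.smul_mem _ hZS
    · rw [← lie_skew, hB5]; exact S.neg_mem (S.smul_mem _ hYS)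
    · rw [← lie_skew, hB2]; exact S.neg_mem (S.smul_mem _ hXS)
    · rw [← lie_skew, hB4]; exact S.neg_mem (S.smul_mem _ hZS)
    · rw [lie_self]; exact S.zero_mem
    · rw [← lie_skew, hB6]; exact S.neg_mem (S.smul_mem _ hXS)
    · rw [← lie_skew, hB3, neg_zero]; exact S.zero_mem
    · rw [hB5]; exact S.smul_mem _ hYS
    · rw [hB6]; exact S.smul_mem _ hXS
    · rw [lie_self]; exact S.zero_mem
  have hclosed : ∀ x ∈ S, ∀ y ∈ S, ⁅x, y⁆ ∈ S := by
    have inner : ∀ g ∈ ({Complex.I • H₀, X, Y, Z} : Set (Matrix (Fin N) (Fin N) ℂ)),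
        ∀ y ∈ S, ⁅g, y⁆ ∈ S := by
      intro g hg y hy
      induction hy using Submodule.span_induction with
      | mem w hw => exact hgen g hg w hw
      | zero => rw [lie_zero]; exact S.zero_mem
      | add u w _ _ hu hw => rw [lie_add]; exact S.add_mem hu hw
      | smul c u _ hu => rw [lie_smul]; exact S.smul_mem c hu
    intro x hx
    induction hx using Submodule.span_induction with
    | mem w hw => exact inner w hw
    | zero => intro y hy; rw [zero_lie]; exact S.zero_mem
    | add u w _ _ hu hw => intro y hy; rw [add_lie]; exact S.add_mem (hu y hy) (hw y hy)
    | smul c u _ hu => intro y hy; rw [smul_lie]; exact S.smul_mem c (hu y hy)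
  let K : LieSubalgebra ℝ (Matrix (Fin N) (Fin N) ℂ) :=
    { S with lie_mem' := fun {x y} hx hy => hclosed x hx y hy }
  have hLK : L ≤ K := by
    apply LieSubalgebra.lieSpan_le.mpr
    intro g hg
    rcases hg with rfl | hg
    · exact hG0S
    · rw [Set.mem_singleton_iff] at hg; subst hg; exact hYS
  have hG0L : Complex.I • H₀ ∈ L := LieSubalgebra.subset_lieSpan (Set.mem_insert _ _)
  have hYL : Y ∈ L := LieSubalgebra.subset_lieSpan (Set.mem_insert_of_mem _ rfl)
  have hXL : X ∈ L := by
    have h := L.lie_mem hG0L hYL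
    rw [hB2] at h
    have h2 := L.smul_mem μ⁻¹ h
    rwa [smul_smul, inv_mul_cancel₀ hμ, one_smul] at h2
  have hZL : Z ∈ L := by
    have h := L.lie_mem hXL hYL
    rw [hB4] at h
    have h2 := L.smul_mem (2:ℝ)⁻¹ h
    rwa [smul_smul, inv_mul_cancel₀ two_ne_zero, one_smul] at h2
  have main_iff : ∀ A : Matrix (Fin N) (Fin N) ℂ, A ∈ L ↔ A ∈ S := by
    intro A
    constructor
    · intro h
      exact hLK h
    · intro h
      have hle : S ≤ L.toSubmodule := by
        apply Submodule.span_le.mpr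
        intro g hg
        simp only [Set.mem_insert_iff, Set.mem_singleton_iff] at hg
        rcases hg with rfl | rfl | rfl | rfl
        exacts [hG0L, hXL, hYL, hZL]
      exact hle h
  refine ⟨main_iff, ?_⟩
  intro hN hall
  have h1N : (1:ℕ) ≤ N - 1 := by omega
  have hd1 : d 1 ≠ 0 := hd 1 le_rfl h1N
  set A0 : Matrix (Fin N) (Fin N) ℂ := Complex.I • e N 1 1 with hA0
  have hA0app : ∀ a b : Fin N, A0 a b
      = if (a:ℕ) = 0 ∧ (b:ℕ) = 0 then Complex.I else 0 := by
    intro a b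
    rw [hA0, Matrix.smul_apply]
    show Complex.I • (if (a:ℕ) + 1 = 1 ∧ (b:ℕ) + 1 = 1 then (1:ℂ) else 0) = _
    rw [smul_eq_mul]
    split_ifs with h1 h2 <;> first | ring1 | (exfalso; omega)
  have hskew : A0ᴴ = -A0 := by
    ext k l
    rw [Matrix.conjTranspose_apply, hA0app l k, Matrix.neg_apply, hA0app k l]
    by_cases h : (k:ℕ) = 0 ∧ (l:ℕ) = 0
    · rw [if_pos ⟨h.2, h.1⟩, if_pos h]
      simp [Complex.star_def, Complex.conj_I]
    · rw [if_neg (fun hc => h ⟨hc.2, hc.1⟩), if_neg h]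
      simp
  have hmem := (main_iff A0).mp (hall A0 hskew)
  rw [hSdef] at hmem
  obtain ⟨a, b, c, t, hAeq⟩ := mem_span_four hmem
  have hRHS : ∀ k l : Fin N, A0 k l =
      (a:ℂ) * (Complex.I * (if k = l then ((E ((k:ℕ)+1) : ℝ) : ℂ) else 0))
      + ((b:ℂ) * ((fx d ((k:ℕ)+1) ((l:ℕ)+1) : ℝ) : ℂ)
      + ((c:ℂ) * (Complex.I * ((fd d ((k:ℕ)+1) ((l:ℕ)+1) : ℝ) : ℂ))
      + (t:ℂ) * (Complex.I * (if k = l then ((d ((k:ℕ)+1)^2 - d (k:ℕ)^2 : ℝ) : ℂ) else 0)))) := by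
    intro k l
    have h := congrFun (congrFun hAeq k) l
    simp only [Matrix.add_apply, Matrix.smul_apply, Complex.real_smul, smul_eq_mul] at h
    rw [hH0app k l, hXapp k l, hYapp k l, hZapp k l] at h
    convert h using 3 <;> ring
  have e00 := hRHS ⟨0, by omega⟩ ⟨0, by omega⟩
  rw [hA0app] at e00
  norm_num [fx, fd, Fin.ext_iff] at e00
  have e11 := hRHS ⟨1, by omega⟩ ⟨1, by omega⟩
  rw [hA0app] at e11
  norm_num [fx, fd, Fin.ext_iff] at e11
  have e22 := hRHS ⟨2, by omega⟩ ⟨2, by omega⟩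
  rw [hA0app] at e22
  norm_num [fx, fd, Fin.ext_iff] at e22
  have e00im := congrArg Complex.im e00
  have e11im := congrArg Complex.im e11
  have e22im := congrArg Complex.im e22
  simp [Complex.add_re, Complex.add_im, Complex.mul_re, Complex.mul_im,
    ← Complex.ofReal_pow, Complex.ofReal_re] at e00im e11im e22im
  have hs1 := hspacing 1 le_rfl h1N
  have hs2 := hspacing 2 (by omega) (by omega)
  have hv1 := hv 1 le_rfl h1N
  have hv2 := hv 2 (by omega) (by omega)
  norm_num at hs1 hs2 hv1 hv2
  have hcontra : (1:ℝ) = 0 := by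
    linear_combination e00im - 2*e11im + e22im - a*hs1 + a*hs2 - t*hv2 + t*hv1
  exact one_ne_zero hcontra
end
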